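/- Let k be an algebraically closed field of characteristic p ≥ 0, let g ≥ 1 and s ≥ 0 be integers with either g ≥ 2 or s ≥ 1, let μ = (μ_1, …, μ_s) be integers with each μ_j ≥ 2, and let π = π_1^orb(C_g, μ) be the associated orbifold group. Then for every group homomorphism ρ : π → kˣ, one has H_1(π; k_ρ) ≠ 0 if and only if: g ≥ 2; or g = 1 and p > 0 and p divides μ_j for some j; or g = 1 and ρ is the trivial homomorphism; or g = 1 and ρ(z_j) ≠ 1 for some j. (Equivalently: if g ≥ 2, or if g = 1 and char(k) divides some μ_j, every rank-one local system lies in the first homology jump locus; if g = 1 and char(k) divides no μ_j, the jump locus consists of the trivial character together with the characters that are nontrivial on some generator z_j.) -/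

import Mathlib

/-!  Group homology in degree one with coefficients in a one-dimensional representation,
via the (inhomogeneous) bar complex.  For a group `G`, a field `k` and a homomorphism
`ρ : G → kˣ`, the relevant piece of the bar complex is
`(G × G →₀ k) --d₂--> (G →₀ k) --d₁--> k` with
`d₁(single g a) = ρ(g)⁻¹·a - a` and
`d₂(single (g,h) a) = single h (ρ(g)⁻¹·a) - single (g·h) a + single g a`,
and `H₁(G; k_ρ) = ker d₁ / im d₂`. -/

/-- The differential `C₁ → C₀` of the bar complex of `G` with coefficients in `k_ρ`. -/
noncomputable def barD1 (k : Type*) [Field k] {G : Type*} [Group G] (ρ : G →* kˣ) :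
    (G →₀ k) →ₗ[k] k :=
  Finsupp.lsum k (fun g => ((((ρ g)⁻¹ : kˣ) : k) - 1) • (LinearMap.id : k →ₗ[k] k))

/-- The differential `C₂ → C₁` of the bar complex of `G` with coefficients in `k_ρ`. -/
noncomputable def barD2 (k : Type*) [Field k] {G : Type*} [Group G] (ρ : G →* kˣ) :
    (G × G →₀ k) →ₗ[k] (G →₀ k) :=
  Finsupp.lsum k (fun p => (((ρ p.1)⁻¹ : kˣ) : k) • Finsupp.lsingle p.2
    - Finsupp.lsingle (p.1 * p.2) + Finsupp.lsingle p.1)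

/-- `H₁(G; k_ρ)`: the first group homology of `G` with coefficients in the one-dimensional
representation `k_ρ`, i.e. `ker d₁ / im d₂` for the bar complex above. -/
noncomputable def H1Rep (k : Type*) [Field k] {G : Type*} [Group G] (ρ : G →* kˣ) : Type _ :=
  @HasQuotient.Quotient (↥(LinearMap.ker (barD1 k ρ)))
    (Submodule k ↥(LinearMap.ker (barD1 k ρ)))
    (Submodule.hasQuotient (R := k) (M := ↥(LinearMap.ker (barD1 k ρ))))
    ((LinearMap.range (barD2 k ρ)).comap (LinearMap.ker (barD1 k ρ)).subtype)

/-- The defining relations of the orbifold group `π₁^orb(C_g, μ)`: generators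
`x_1, …, x_g` (first summand), `y_1, …, y_g` (second summand), `z_1, …, z_s` (third
summand), relations `([x_1,y_1]⋯[x_g,y_g])·z_1⋯z_s = 1` and `z_j^{μ_j} = 1`. -/
def orbRels (g s : ℕ) (μ : Fin s → ℕ) : Set (FreeGroup (Fin g ⊕ Fin g ⊕ Fin s)) :=
  insert
    ((((List.finRange g).map (fun i =>
        FreeGroup.of (Sum.inl i) * FreeGroup.of (Sum.inr (Sum.inl i)) *
        (FreeGroup.of (Sum.inl i))⁻¹ * (FreeGroup.of (Sum.inr (Sum.inl i)))⁻¹)).prod) *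
      (((List.finRange s).map (fun j => FreeGroup.of (Sum.inr (Sum.inr j)))).prod))
    {r | ∃ j : Fin s, r = FreeGroup.of (Sum.inr (Sum.inr j)) ^ μ j}

/-- The orbifold group `π₁^orb(C_g, μ)`. -/
def OrbGroup (g s : ℕ) (μ : Fin s → ℕ) : Type :=
  PresentedGroup (orbRels g s μ)

instance (g s : ℕ) (μ : Fin s → ℕ) : Group (OrbGroup g s μ) := by
  unfold OrbGroup; infer_instance

/-- The generator `z_j` of the orbifold group. -/
def OrbGroup.z {g s : ℕ} {μ : Fin s → ℕ} (j : Fin s) : OrbGroup g s μ :=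
  PresentedGroup.of (Sum.inr (Sum.inr j))


structure Aff (k : Type*) [Field k] where
  t : k
  u : kˣ

namespace Aff
variable {k : Type*} [Field k]
@[ext] lemma ext' {a b : Aff k} (h1 : a.t = b.t) (h2 : a.u = b.u) : a = b := by
  cases a; cases b; simp_all
instance : Mul (Aff k) := ⟨fun a b => ⟨a.t + (a.u : k) * b.t, a.u * b.u⟩⟩
instance : One (Aff k) := ⟨⟨0, 1⟩⟩
instance : Inv (Aff k) := ⟨fun a => ⟨-(((a.u⁻¹ : kˣ) : k) * a.t), a.u⁻¹⟩⟩
@[simp] lemma mul_t (a b : Aff k) : (a * b).t = a.t + (a.u : k) * b.t := rfl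
@[simp] lemma mul_u (a b : Aff k) : (a * b).u = a.u * b.u := rfl
@[simp] lemma one_t : (1 : Aff k).t = 0 := rfl
@[simp] lemma one_u : (1 : Aff k).u = 1 := rfl
@[simp] lemma inv_t (a : Aff k) : (a⁻¹).t = -(((a.u⁻¹ : kˣ) : k) * a.t) := rfl
@[simp] lemma inv_u (a : Aff k) : (a⁻¹).u = a.u⁻¹ := rfl
instance : Group (Aff k) where
  mul_assoc a b c := by
    ext
    · simp [Units.val_mul]; ring
    · simp [mul_assoc]
  one_mul a := by ext <;> simp
  mul_one a := by ext <;> simp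
  inv_mul_cancel a := by ext <;> simp
def uHom : Aff k →* kˣ where
  toFun := Aff.u
  map_one' := rfl
  map_mul' _ _ := rfl
@[simp] lemma uHom_apply (a : Aff k) : uHom a = a.u := rfl
lemma pow_u (a : Aff k) (n : ℕ) : (a ^ n).u = a.u ^ n := by
  simpa using map_pow (uHom (k := k)) a n
lemma pow_t (a : Aff k) (n : ℕ) :
    (a ^ n).t = (∑ i ∈ Finset.range n, ((a.u : k)) ^ i) * a.t := by
  induction n with
  | zero => simp
  | succ n ih =>
    rw [pow_succ', mul_t, ih, geom_sum_succ]
    ring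
lemma commutator_t (a b : Aff k) :
    (a * b * a⁻¹ * b⁻¹).t = (1 - (b.u : k)) * a.t + ((a.u : k) - 1) * b.t := by
  simp [Units.val_mul, mul_comm, mul_assoc, mul_left_comm]
  field_simp
  ring
lemma commutator_u (a b : Aff k) : (a * b * a⁻¹ * b⁻¹).u = 1 := by
  simp [mul_comm, mul_assoc, mul_left_comm]
lemma list_prod_u_one (L : List (Aff k)) (h : ∀ a ∈ L, a.u = 1) : L.prod.u = 1 := by
  induction L with
  | nil => simp
  | cons a L ih =>
    simp only [List.prod_cons, mul_u]
    rw [h a (by simp), ih (fun b hb => h b (by simp [hb]))]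
    simp
lemma list_prod_t_of_u_one (L : List (Aff k)) (h : ∀ a ∈ L, a.u = 1) :
    L.prod.t = (L.map Aff.t).sum := by
  induction L with
  | nil => simp
  | cons a L ih =>
    simp only [List.prod_cons, mul_t, List.map_cons, List.sum_cons]
    rw [h a (by simp), ih (fun b hb => h b (by simp [hb]))]
    simp
end Aff


namespace H1Orb


variable {k : Type*} [Field k] {G : Type*} [Group G]

/-- `σ g = ρ(g)⁻¹` as an element of `k`. -/
noncomputable def sig (ρ : G →* kˣ) (g : G) : k := ((ρ g)⁻¹ : kˣ)

def IsCocycle (ρ : G →* kˣ) (φ : G → k) : Prop :=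
  ∀ g h, φ (g * h) = φ g + sig ρ g * φ h

def IsPrincipal (ρ : G →* kˣ) (φ : G → k) : Prop :=
  ∃ c : k, ∀ g, φ g = c * (sig ρ g - 1)

lemma barD1_single (ρ : G →* kˣ) (g : G) (a : k) :
    barD1 k ρ (Finsupp.single g a) = (sig ρ g - 1) * a := by
  simp [barD1, sig, smul_eq_mul]

lemma barD2_single (ρ : G →* kˣ) (g h : G) (a : k) :
    barD2 k ρ (Finsupp.single (g, h) a) =
      sig ρ g • Finsupp.single h a - Finsupp.single (g * h) a + Finsupp.single g a := by
  simp [barD2, sig]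

lemma nontrivial_H1Rep_iff (ρ : G →* kˣ) :
    Nontrivial (H1Rep k ρ) ↔
      ∃ x : G →₀ k, barD1 k ρ x = 0 ∧ x ∉ LinearMap.range (barD2 k ρ) := by
  have h1 : Subsingleton (H1Rep k ρ) ↔
      (LinearMap.range (barD2 k ρ)).comap (LinearMap.ker (barD1 k ρ)).subtype = ⊤ :=
    Submodule.Quotient.subsingleton_iff
  rw [← not_subsingleton_iff_nontrivial, h1]
  constructor
  · intro hne
    by_contra hx
    push_neg at hx
    apply hne
    rw [Submodule.eq_top_iff']
    rintro ⟨x, hx1⟩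
    simpa [Submodule.mem_comap] using hx x (LinearMap.mem_ker.mp hx1)
  · rintro ⟨x, h1, h2⟩ htop
    have : (⟨x, LinearMap.mem_ker.mpr h1⟩ : LinearMap.ker (barD1 k ρ)) ∈
        (LinearMap.range (barD2 k ρ)).comap (LinearMap.ker (barD1 k ρ)).subtype := by
      rw [htop]; trivial
    exact h2 (by simpa [Submodule.mem_comap] using this)

lemma stepA (ρ : G →* kˣ) :
    Nontrivial (H1Rep k ρ) ↔ ∃ φ : G → k, IsCocycle ρ φ ∧ ¬ IsPrincipal ρ φ := by
  rw [nontrivial_H1Rep_iff]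
  constructor
  · rintro ⟨x, hx1, hx2⟩
    -- build a functional via the quotient by range d₂
    set Q := (G →₀ k) ⧸ LinearMap.range (barD2 k ρ)
    have hxq : (Submodule.mkQ (LinearMap.range (barD2 k ρ))) x ≠ 0 := by
      simpa [Submodule.mkQ_apply, Submodule.Quotient.mk_eq_zero] using hx2
    obtain ⟨ψ, hψ⟩ : ∃ ψ : Module.Dual k Q, ψ ((Submodule.mkQ _) x) ≠ 0 := by
      by_contra hc
      push_neg at hc
      exact hxq ((Module.forall_dual_apply_eq_zero_iff k _).mp hc)
    set f : (G →₀ k) →ₗ[k] k := ψ ∘ₗ Submodule.mkQ _ with hf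
    have hfd2 : ∀ y, f (barD2 k ρ y) = 0 := by
      intro y
      have : (Submodule.mkQ (LinearMap.range (barD2 k ρ))) (barD2 k ρ y) = 0 := by
        simp [Submodule.mkQ_apply, Submodule.Quotient.mk_eq_zero]
      simp [hf, this]
    refine ⟨fun g => f (Finsupp.single g 1), ?_, ?_⟩
    · intro g h
      have h2 := hfd2 (Finsupp.single (g, h) 1)
      rw [barD2_single] at h2
      simp only [map_add, map_sub, map_smul, smul_eq_mul] at h2
      show f (Finsupp.single (g * h) 1) = f (Finsupp.single g 1)
        + sig ρ g * f (Finsupp.single h 1)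
      linear_combination -h2
    · rintro ⟨c, hc⟩
      have hfx : f = c • barD1 k ρ := by
        apply Finsupp.lhom_ext
        intro g a
        have hsa : Finsupp.single g a = a • Finsupp.single g 1 := by
          simp [Finsupp.smul_single]
        have h1 : f (Finsupp.single g a) = a * f (Finsupp.single g 1) := by
          rw [hsa, map_smul, smul_eq_mul]
        have h2 := hc g
        simp only [] at h2
        rw [h1, h2]
        simp only [LinearMap.smul_apply, barD1_single, smul_eq_mul]
        ring
      have : f x = 0 := by rw [hfx]; simp [hx1]
      exact hψ this
  · rintro ⟨φ, hco, hpr⟩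
    set f : (G →₀ k) →ₗ[k] k := Finsupp.lsum k (fun g => φ g • (LinearMap.id : k →ₗ[k] k)) with hf
    have hfs : ∀ (g : G) (a : k), f (Finsupp.single g a) = φ g * a := by
      intro g a; simp [hf, smul_eq_mul]
    have hfd2 : ∀ y, f (barD2 k ρ y) = 0 := by
      have : f ∘ₗ barD2 k ρ = 0 := by
        apply Finsupp.lhom_ext
        rintro ⟨g, h⟩ a
        simp only [LinearMap.comp_apply, LinearMap.zero_apply, barD2_single]
        simp only [map_add, map_sub, map_smul, hfs, smul_eq_mul]
        rw [hco g h]; ring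
      intro y
      exact DFunLike.congr_fun this y
    -- find x in ker d1 with f x ≠ 0
    obtain ⟨x, hx1, hx3⟩ : ∃ x, barD1 k ρ x = 0 ∧ f x ≠ 0 := by
      by_cases hσ : ∀ g : G, sig ρ g = 1
      · have hφ0 : ∃ g, φ g ≠ 0 := by
          by_contra hc; push_neg at hc
          exact hpr ⟨0, fun g => by rw [hc g]; ring⟩
        obtain ⟨g₀, hg₀⟩ := hφ0
        exact ⟨Finsupp.single g₀ 1, by rw [barD1_single, hσ]; ring,
          by rw [hfs]; simpa using hg₀⟩
      · push_neg at hσ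
        obtain ⟨g₀, hg₀⟩ := hσ
        have hne : sig ρ g₀ - 1 ≠ 0 := sub_ne_zero.mpr hg₀
        obtain ⟨g₁, hg₁⟩ : ∃ g₁, φ g₁ ≠ (φ g₀ / (sig ρ g₀ - 1)) * (sig ρ g₁ - 1) := by
          by_contra hc; push_neg at hc
          exact hpr ⟨φ g₀ / (sig ρ g₀ - 1), hc⟩
        refine ⟨Finsupp.single g₁ (sig ρ g₀ - 1) - Finsupp.single g₀ (sig ρ g₁ - 1), ?_, ?_⟩
        · rw [map_sub, barD1_single, barD1_single]; ring
        · rw [map_sub, hfs, hfs]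
          intro hc
          apply hg₁
          rw [div_mul_eq_mul_div, eq_div_iff hne]
          linear_combination hc
    refine ⟨x, hx1, ?_⟩
    rintro ⟨y, rfl⟩
    exact hx3 (hfd2 y)


section Orb

variable {k : Type*} [Field k] {g s : ℕ} {μ : Fin s → ℕ}

/-- The generator type. -/
abbrev TT (g s : ℕ) := Fin g ⊕ Fin g ⊕ Fin s

variable (ρ : OrbGroup g s μ →* kˣ)

/-- The projection from the free group, typed with target `OrbGroup`. -/
def mkOrb : FreeGroup (TT g s) →* OrbGroup g s μ := PresentedGroup.mk (orbRels g s μ)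

/-- σ-value of a generator. -/
noncomputable def cg (t : TT g s) : k := sig ρ (PresentedGroup.of t)

lemma cg_ne_zero (t : TT g s) : cg ρ t ≠ 0 := by
  simp only [cg, sig]
  exact Units.ne_zero _

/-- The "norm" element `1 + c_j + ⋯ + c_j^{μ_j - 1}`. -/
noncomputable def NN (j : Fin s) : k :=
  ∑ i ∈ Finset.range (μ j), (cg ρ (Sum.inr (Sum.inr j))) ^ i

/-- Lift to the affine group determined by generator values `v`. -/
noncomputable def affGen (v : TT g s → k) : FreeGroup (TT g s) →* Aff k :=
  FreeGroup.lift (fun t => ⟨v t, (ρ (PresentedGroup.of t))⁻¹⟩)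

@[simp] lemma affGen_of (v : TT g s → k) (t : TT g s) :
    affGen ρ v (FreeGroup.of t) = ⟨v t, (ρ (PresentedGroup.of t))⁻¹⟩ :=
  FreeGroup.lift_apply_of

lemma affGen_u (v : TT g s → k) (w : FreeGroup (TT g s)) :
    (affGen ρ v w).u = (ρ (mkOrb w))⁻¹ := by
  have h : Aff.uHom.comp (affGen ρ v) = (ρ.comp mkOrb)⁻¹ := by
    ext t
    simp only [MonoidHom.comp_apply, MonoidHom.inv_apply, affGen_of, Aff.uHom_apply]
    rfl
  have := DFunLike.congr_fun h w
  simpa using this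

/-- The z-part of the long-relation functional, defined recursively. -/
noncomputable def zLam (ρ : OrbGroup g s μ →* kˣ) : k → List (Fin s) → ((TT g s → k) →ₗ[k] k)
  | _, [] => 0
  | u, j :: L => u • LinearMap.proj (Sum.inr (Sum.inr j))
      + zLam ρ (u * cg ρ (Sum.inr (Sum.inr j))) L

/-- The xy-part of the long-relation functional. -/
noncomputable def xyLam : (TT g s → k) →ₗ[k] k :=
  ((List.finRange g).map (fun i =>
    (1 - cg ρ (Sum.inr (Sum.inl i))) • LinearMap.proj (Sum.inl i)
    + (cg ρ (Sum.inl i) - 1) • LinearMap.proj (Sum.inr (Sum.inl i)))).sum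

/-- The long-relation functional. -/
noncomputable def Lam : (TT g s → k) →ₗ[k] k := xyLam ρ + zLam ρ 1 (List.finRange s)

/-- The constraint map whose kernel is the space of admissible generator values. -/
noncomputable def Phi : (TT g s → k) →ₗ[k] k × (Fin s → k) :=
  (Lam ρ).prod (LinearMap.pi fun j => NN ρ j • LinearMap.proj (Sum.inr (Sum.inr j)))

noncomputable def SS : Submodule k (TT g s → k) := LinearMap.ker (Phi ρ)

noncomputable def pz : TT g s → k := fun t => cg ρ t - 1

noncomputable def PP : Submodule k (TT g s → k) := Submodule.span k {pz ρ}

lemma mem_SS {v : TT g s → k} :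
    v ∈ SS ρ ↔ Lam ρ v = 0 ∧ ∀ j, NN ρ j * v (Sum.inr (Sum.inr j)) = 0 := by
  simp [SS, Phi, LinearMap.mem_ker, Prod.ext_iff, funext_iff, LinearMap.pi_apply,
    smul_eq_mul]

lemma zLam_apply_cons (u : k) (j : Fin s) (L : List (Fin s)) (v : TT g s → k) :
    zLam ρ u (j :: L) v = u * v (Sum.inr (Sum.inr j))
      + zLam ρ (u * cg ρ (Sum.inr (Sum.inr j))) L v := by
  simp [zLam, smul_eq_mul]

lemma affGen_zprod (v : TT g s → k) (L : List (Fin s)) (u : k) :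
    u * (affGen ρ v ((L.map (fun j => FreeGroup.of (Sum.inr (Sum.inr j)))).prod)).t
      = zLam ρ u L v := by
  induction L generalizing u with
  | nil => simp [zLam]
  | cons j L ih =>
    rw [List.map_cons, List.prod_cons, map_mul, zLam_apply_cons, ← ih]
    simp only [Aff.mul_t, affGen_of]
    have : ((affGen ρ v (FreeGroup.of (Sum.inr (Sum.inr j)))).u : k)
        = cg ρ (Sum.inr (Sum.inr j)) := by
      simp [cg, sig]
    simp only [affGen_of] at this ⊢
    rw [this]  -- ?
    ring

lemma xyLam_apply (v : TT g s → k) :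
    xyLam ρ v = ((List.finRange g).map (fun i =>
      (1 - cg ρ (Sum.inr (Sum.inl i))) * v (Sum.inl i)
      + (cg ρ (Sum.inl i) - 1) * v (Sum.inr (Sum.inl i)))).sum := by
  have h := map_list_sum (LinearMap.applyₗ (R := k) v) ((List.finRange g).map (fun i =>
    (1 - cg ρ (Sum.inr (Sum.inl i))) • LinearMap.proj (Sum.inl i)
    + (cg ρ (Sum.inl i) - 1) • (LinearMap.proj (Sum.inr (Sum.inl i))
        : (TT g s → k) →ₗ[k] k)))
  simp only [List.map_map] at h
  have h2 : ((LinearMap.applyₗ (R := k) v) ∘ fun i =>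
      (1 - cg ρ (Sum.inr (Sum.inl i))) • LinearMap.proj (Sum.inl i)
      + (cg ρ (Sum.inl i) - 1) • (LinearMap.proj (Sum.inr (Sum.inl i))
          : (TT g s → k) →ₗ[k] k))
      = fun i => (1 - cg ρ (Sum.inr (Sum.inl i))) * v (Sum.inl i)
      + (cg ρ (Sum.inl i) - 1) * v (Sum.inr (Sum.inl i)) := by
    funext i
    simp [smul_eq_mul]
  rw [h2] at h
  exact h

/-- The long relator. -/
def longRel (g s : ℕ) : FreeGroup (TT g s) :=
  (((List.finRange g).map (fun i =>
      FreeGroup.of (Sum.inl i) * FreeGroup.of (Sum.inr (Sum.inl i)) *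
      (FreeGroup.of (Sum.inl i))⁻¹ * (FreeGroup.of (Sum.inr (Sum.inl i)))⁻¹)).prod) *
    (((List.finRange s).map (fun j => FreeGroup.of (Sum.inr (Sum.inr j)))).prod)

lemma orbRels_eq : orbRels g s μ = insert (longRel g s)
    {r | ∃ j : Fin s, r = FreeGroup.of (Sum.inr (Sum.inr j)) ^ μ j} := rfl

@[simp] lemma cg_eq (t : TT g s) : ((ρ (PresentedGroup.of t))⁻¹ : kˣ) = (cg ρ t : k) := rfl

lemma affGen_xyprod_u (v : TT g s → k) :
    (affGen ρ v (((List.finRange g).map (fun i =>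
      FreeGroup.of (Sum.inl i) * FreeGroup.of (Sum.inr (Sum.inl i)) *
      (FreeGroup.of (Sum.inl i))⁻¹ * (FreeGroup.of (Sum.inr (Sum.inl i)))⁻¹)).prod)).u = 1 := by
  rw [map_list_prod]
  apply Aff.list_prod_u_one
  intro a ha
  simp only [List.map_map, List.mem_map] at ha
  obtain ⟨i, _, rfl⟩ := ha
  simp only [Function.comp_apply, map_mul, map_inv]
  exact Aff.commutator_u _ _

lemma affGen_xyprod_t (v : TT g s → k) :
    (affGen ρ v (((List.finRange g).map (fun i =>
      FreeGroup.of (Sum.inl i) * FreeGroup.of (Sum.inr (Sum.inl i)) *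
      (FreeGroup.of (Sum.inl i))⁻¹ * (FreeGroup.of (Sum.inr (Sum.inl i)))⁻¹)).prod)).t
      = xyLam ρ v := by
  rw [map_list_prod, Aff.list_prod_t_of_u_one, xyLam_apply]
  · congr 1
    rw [List.map_map, List.map_map]
    congr 1
    funext i
    simp only [Function.comp_apply, map_mul, map_inv]
    rw [Aff.commutator_t]
    simp [cg, sig]
  · intro a ha
    simp only [List.map_map, List.mem_map] at ha
    obtain ⟨i, _, rfl⟩ := ha
    simp only [Function.comp_apply, map_mul, map_inv]
    exact Aff.commutator_u _ _

lemma affGen_longRel_t (v : TT g s → k) :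
    (affGen ρ v (longRel g s)).t = Lam ρ v := by
  rw [longRel, map_mul, Aff.mul_t, affGen_xyprod_t, affGen_xyprod_u]
  have := affGen_zprod ρ v (List.finRange s) 1
  rw [one_mul] at this
  rw [Lam]
  simp only [LinearMap.add_apply, Units.val_one, one_mul, this]

lemma affGen_zpow_t (v : TT g s → k) (j : Fin s) :
    (affGen ρ v (FreeGroup.of (Sum.inr (Sum.inr j)) ^ μ j)).t
      = NN ρ j * v (Sum.inr (Sum.inr j)) := by
  rw [map_pow, Aff.pow_t, affGen_of]
  rfl

lemma mk_rel_one {r : FreeGroup (TT g s)} (hr : r ∈ orbRels g s μ) :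
    (mkOrb r : OrbGroup g s μ) = 1 := by
  have h : r ∈ Subgroup.normalClosure (orbRels g s μ) := Subgroup.subset_normalClosure hr
  exact (QuotientGroup.eq_one_iff r).mpr h

lemma affGen_rels (v : TT g s → k) (hv : v ∈ SS ρ) :
    ∀ r ∈ orbRels g s μ, affGen ρ v r = 1 := by
  intro r hr
  have hu : (affGen ρ v r).u = 1 := by
    rw [affGen_u, mk_rel_one hr]
    simp
  rw [orbRels_eq, Set.mem_insert_iff] at hr
  rcases hr with rfl | ⟨j, rfl⟩
  · ext
    · rw [affGen_longRel_t, (mem_SS ρ).mp hv |>.1, Aff.one_t]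
    · rw [hu, Aff.one_u]
  · ext
    · rw [affGen_zpow_t, (mem_SS ρ).mp hv |>.2 j, Aff.one_t]
    · rw [hu, Aff.one_u]

/-- The affine representation of the orbifold group determined by admissible values `v`. -/
noncomputable def toAff (v : TT g s → k) (hv : v ∈ SS ρ) : OrbGroup g s μ →* Aff k :=
  PresentedGroup.toGroup (affGen_rels ρ v hv)

@[simp] lemma toAff_of (v : TT g s → k) (hv : v ∈ SS ρ) (t : TT g s) :
    toAff ρ v hv (PresentedGroup.of t) = ⟨v t, (ρ (PresentedGroup.of t))⁻¹⟩ :=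
  PresentedGroup.toGroup.of _

lemma toAff_u (v : TT g s → k) (hv : v ∈ SS ρ) (x : OrbGroup g s μ) :
    (toAff ρ v hv x).u = (ρ x)⁻¹ := by
  have h : Aff.uHom.comp (toAff ρ v hv) = ρ⁻¹ := by
    apply PresentedGroup.ext
    intro t
    show ((toAff ρ v hv) (PresentedGroup.of t)).u = (ρ (PresentedGroup.of t))⁻¹
    rw [toAff_of]
  have := DFunLike.congr_fun h x
  simpa using this

lemma sig_one' {k : Type*} [Field k] {G : Type*} [Group G] (ρ : G →* kˣ) : sig ρ 1 = 1 := by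
  simp [sig]

lemma sig_mul {k : Type*} [Field k] {G : Type*} [Group G] (ρ : G →* kˣ) (x y : G) :
    sig ρ (x * y) = sig ρ x * sig ρ y := by
  simp [sig, map_mul, mul_inv_rev, Units.val_mul, mul_comm]

lemma principal_isCocycle {k : Type*} [Field k] {G : Type*} [Group G] (ρ : G →* kˣ) (c : k) :
    IsCocycle ρ (fun x => c * (sig ρ x - 1)) := by
  intro x y
  show c * (sig ρ (x * y) - 1) = c * (sig ρ x - 1) + sig ρ x * (c * (sig ρ y - 1))
  rw [sig_mul]
  ring

lemma cocycle_one {k : Type*} [Field k] {G : Type*} [Group G] {ρ : G →* kˣ} {φ : G → k}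
    (hφ : IsCocycle ρ φ) : φ 1 = 0 := by
  have := hφ 1 1
  rw [mul_one, sig_one', one_mul] at this
  exact (left_eq_add.mp this)

/-- The cocycle with prescribed values on the generators. -/
noncomputable def phiOf (v : TT g s → k) (hv : v ∈ SS ρ) : OrbGroup g s μ → k :=
  fun x => (toAff ρ v hv x).t

lemma phiOf_isCocycle (v : TT g s → k) (hv : v ∈ SS ρ) : IsCocycle ρ (phiOf ρ v hv) := by
  intro x y
  simp only [phiOf, map_mul, Aff.mul_t, toAff_u]
  rfl

lemma phiOf_of (v : TT g s → k) (hv : v ∈ SS ρ) (t : TT g s) :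
    phiOf ρ v hv (PresentedGroup.of t) = v t := by
  simp only [phiOf, toAff_of]

/-- The affine representation attached to a cocycle. -/
noncomputable def ofCocycle {φ : OrbGroup g s μ → k} (hφ : IsCocycle ρ φ) :
    OrbGroup g s μ →* Aff k where
  toFun x := ⟨φ x, (ρ x)⁻¹⟩
  map_one' := by
    ext
    · simp [cocycle_one hφ]
    · simp
  map_mul' x y := by
    ext
    · simp only [Aff.mul_t]
      rw [hφ x y]
      rfl
    · simp [mul_inv_rev, mul_comm]

lemma genvec_mem_SS {φ : OrbGroup g s μ → k} (hφ : IsCocycle ρ φ) :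
    (fun t => φ (PresentedGroup.of t)) ∈ SS ρ := by
  set v : TT g s → k := fun t => φ (PresentedGroup.of t) with hvdef
  have hcomp : (ofCocycle ρ hφ).comp mkOrb = affGen ρ v := by
    refine FreeGroup.ext_hom _ _ fun t => ?_
    rw [MonoidHom.comp_apply, affGen_of]
    rfl
  have hrel : ∀ r ∈ orbRels g s μ, affGen ρ v r = 1 := by
    intro r hr
    rw [← hcomp, MonoidHom.comp_apply, mk_rel_one hr, map_one]
  rw [mem_SS]
  constructor
  · have h1 := hrel (longRel g s) (by rw [orbRels_eq]; exact Set.mem_insert _ _)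
    have := congrArg Aff.t h1
    rwa [affGen_longRel_t, Aff.one_t] at this
  · intro j
    have h1 := hrel (FreeGroup.of (Sum.inr (Sum.inr j)) ^ μ j)
      (by rw [orbRels_eq]; exact Set.mem_insert_iff.mpr (Or.inr ⟨j, rfl⟩))
    have := congrArg Aff.t h1
    rwa [affGen_zpow_t, Aff.one_t] at this

lemma cocycle_ext {φ₁ φ₂ : OrbGroup g s μ → k} (h1 : IsCocycle ρ φ₁) (h2 : IsCocycle ρ φ₂)
    (h : ∀ t, φ₁ (PresentedGroup.of t) = φ₂ (PresentedGroup.of t)) : φ₁ = φ₂ := by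
  have heq : ofCocycle ρ h1 = ofCocycle ρ h2 := by
    apply PresentedGroup.ext
    intro t
    show (⟨φ₁ (PresentedGroup.of t), _⟩ : Aff k) = ⟨φ₂ (PresentedGroup.of t), _⟩
    rw [h t]
  funext x
  have := DFunLike.congr_fun heq x
  exact congrArg Aff.t this

lemma pz_apply (t : TT g s) : pz ρ t = cg ρ t - 1 := rfl

/-- The bridge: existence of a non-principal cocycle is equivalent to `¬ S ≤ P`. -/
lemma bridge :
    (∃ φ : OrbGroup g s μ → k, IsCocycle ρ φ ∧ ¬ IsPrincipal ρ φ) ↔ ¬ (SS ρ ≤ PP ρ) := by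
  constructor
  · rintro ⟨φ, hco, hpr⟩ hle
    have hv : (fun t => φ (PresentedGroup.of t)) ∈ SS ρ := genvec_mem_SS ρ hco
    obtain ⟨c, hc⟩ := Submodule.mem_span_singleton.mp (hle hv)
    apply hpr
    refine ⟨c, fun x => ?_⟩
    have heq : φ = fun x => c * (sig ρ x - 1) := by
      apply cocycle_ext ρ hco (principal_isCocycle ρ c)
      intro t
      have h2 : c * (cg ρ t - 1) = φ (PresentedGroup.of t) := by
        have h3 := congrFun hc t
        rwa [Pi.smul_apply, smul_eq_mul, pz_apply] at h3
      show φ (PresentedGroup.of t) = c * (sig ρ (PresentedGroup.of t) - 1)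
      exact h2.symm
    exact congrFun heq x
  · intro hle
    have hex : ∃ v ∈ SS ρ, v ∉ PP ρ := by
      by_contra hcon
      push_neg at hcon
      exact hle (fun v hv => hcon v hv)
    obtain ⟨v, hv, hvp⟩ := hex
    refine ⟨phiOf ρ v hv, phiOf_isCocycle ρ v hv, ?_⟩
    rintro ⟨c, hc⟩
    apply hvp
    rw [PP, Submodule.mem_span_singleton]
    refine ⟨c, ?_⟩
    funext t
    have h2 := hc (PresentedGroup.of t)
    rw [phiOf_of] at h2
    rw [Pi.smul_apply, smul_eq_mul, pz_apply, h2]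
    rfl

lemma zLam_eq_zero (u : k) (L : List (Fin s)) (v : TT g s → k)
    (h : ∀ l ∈ L, v (Sum.inr (Sum.inr l)) = 0) : zLam ρ u L v = 0 := by
  induction L generalizing u with
  | nil => simp [zLam]
  | cons j L ih =>
    rw [zLam_apply_cons, h j (by simp), ih _ (fun l hl => h l (by simp [hl])),
      mul_zero, add_zero]

lemma zLam_single (L : List (Fin s)) (j : Fin s) (hj : j ∈ L) (hnd : L.Nodup) :
    ∀ u : k, u ≠ 0 →
    ∃ w : k, w ≠ 0 ∧ ∀ v : TT g s → k, (∀ l, l ≠ j → v (Sum.inr (Sum.inr l)) = 0) →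
      zLam ρ u L v = w * v (Sum.inr (Sum.inr j)) := by
  induction L with
  | nil => simp at hj
  | cons a L ih =>
    intro u hu
    rcases List.mem_cons.mp hj with rfl | hj'
    · refine ⟨u, hu, fun v hv => ?_⟩
      rw [zLam_apply_cons, zLam_eq_zero ρ _ _ v (fun l hl => hv l ?_), add_zero]
      rintro rfl
      exact (List.nodup_cons.mp hnd).1 hl
    · have haj : a ≠ j := by
        rintro rfl
        exact (List.nodup_cons.mp hnd).1 hj'
      obtain ⟨w, hw, hwv⟩ := ih hj' (List.nodup_cons.mp hnd).2
        (u * cg ρ (Sum.inr (Sum.inr a))) (mul_ne_zero hu (cg_ne_zero ρ _))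
      refine ⟨w, hw, fun v hv => ?_⟩
      rw [zLam_apply_cons, hv a haj, hwv v hv, mul_zero, zero_add]

lemma Lam_apply (v : TT g s → k) :
    Lam ρ v = xyLam ρ v + zLam ρ 1 (List.finRange s) v := rfl

lemma cg_pow_eq_one (j : Fin s) : cg ρ (Sum.inr (Sum.inr j)) ^ (μ j) = 1 := by
  have hz : (PresentedGroup.of (Sum.inr (Sum.inr j)) : OrbGroup g s μ) ^ (μ j) = 1 := by
    have h := mk_rel_one (g := g) (μ := μ)
      (r := FreeGroup.of (Sum.inr (Sum.inr j)) ^ μ j)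
      (Set.mem_insert_iff.mpr (Or.inr ⟨j, rfl⟩))
    rw [map_pow] at h
    exact h
  rw [cg]; unfold sig; rw [← Units.val_pow_eq_pow_val, inv_pow]
  have hz' : ρ (PresentedGroup.of (Sum.inr (Sum.inr j))) ^ μ j = 1 :=
    (map_pow ρ _ _).symm.trans ((congrArg ρ hz).trans (map_one ρ))
  rw [hz']
  simp

lemma NN_eq_zero_iff (j : Fin s) :
    NN ρ j = 0 ↔ (cg ρ (Sum.inr (Sum.inr j)) ≠ 1 ∨ ((μ j : k) = 0)) := by
  by_cases hc : cg ρ (Sum.inr (Sum.inr j)) = 1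
  · rw [NN]
    simp [hc]
  · have h0 : NN ρ j * (cg ρ (Sum.inr (Sum.inr j)) - 1) = 0 := by
      rw [NN, geom_sum_mul, cg_pow_eq_one, sub_self]
    have : NN ρ j = 0 := by
      rcases mul_eq_zero.mp h0 with h | h
      · exact h
      · exact absurd (sub_eq_zero.mp h) hc
    simp [this, hc]

lemma cg_eq_one_iff (t : TT g s) : cg ρ t = 1 ↔ ρ (PresentedGroup.of t) = 1 := by
  rw [cg]; unfold sig
  simp [Units.val_eq_one, inv_eq_one]

lemma rho_eq_one_iff : ρ = 1 ↔ ∀ t : TT g s, ρ (PresentedGroup.of t) = 1 := by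
  constructor
  · rintro rfl t; rfl
  · intro h
    apply PresentedGroup.ext
    intro t
    exact (h t).trans rfl

end Orb
end H1Orb

/-- Let `k` be an algebraically closed field of characteristic `p ≥ 0` and
`π = π₁^orb(C_g, μ)` with `g ≥ 1`, each `μ_j ≥ 2` and `χ^orb < 0` (i.e. `g ≥ 2` or `s ≥ 1`).
For every rank-one representation `ρ : π → kˣ` one has `H₁(π; k_ρ) ≠ 0` iff: `g ≥ 2`; or
`g = 1` and `p > 0` divides some `μ_j`; or `g = 1` and `ρ` is trivial; or `g = 1` and
`ρ(z_j) ≠ 1` for some `j`. -/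
theorem h1_orbifold_group_ne_zero_iff
    (k : Type*) [Field k] [IsAlgClosed k] (p : ℕ) [CharP k p]
    (g s : ℕ) (hg : 1 ≤ g) (hgs : 2 ≤ g ∨ 1 ≤ s)
    (μ : Fin s → ℕ) (hμ : ∀ j, 2 ≤ μ j)
    (ρ : OrbGroup g s μ →* kˣ) :
    Nontrivial (H1Rep k ρ) ↔
      (2 ≤ g ∨
        (g = 1 ∧ 0 < p ∧ ∃ j, p ∣ μ j) ∨
        (g = 1 ∧ ρ = 1) ∨
        (g = 1 ∧ ∃ j, ρ (OrbGroup.z j) ≠ 1)) := by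
  classical
  rw [H1Orb.stepA ρ, H1Orb.bridge ρ]
  by_cases hg2 : 2 ≤ g
  · simp only [hg2, true_or, iff_true]
    intro hle
    have e1 := LinearMap.finrank_range_add_finrank_ker (H1Orb.Phi ρ)
    have e2 : Module.finrank k (H1Orb.TT g s → k) = g + (g + s) := by
      rw [Module.finrank_pi]
      simp
    rw [e2] at e1
    have e3 : Module.finrank k (LinearMap.range (H1Orb.Phi ρ)) ≤ 1 + s := by
      have h := Submodule.finrank_le (LinearMap.range (H1Orb.Phi ρ))
      have h2 : Module.finrank k (k × (Fin s → k)) = 1 + s := by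
        rw [Module.finrank_prod, Module.finrank_pi, Module.finrank_self]
        simp
      omega
    have e4 : Module.finrank k (H1Orb.SS ρ) ≤ Module.finrank k (H1Orb.PP ρ) :=
      Submodule.finrank_mono hle
    have e5 : Module.finrank k (H1Orb.PP ρ) ≤ 1 := by
      refine (finrank_span_le_card _).trans ?_
      simp
    have e6 : Module.finrank k (H1Orb.SS ρ)
        = Module.finrank k (LinearMap.ker (H1Orb.Phi ρ)) := rfl
    omega
  · have hg1 : g = 1 := by omega
    subst hg1
    have hR : (2 ≤ 1 ∨ (1 = 1 ∧ 0 < p ∧ ∃ j, p ∣ μ j) ∨ (1 = 1 ∧ ρ = 1)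
        ∨ (1 = 1 ∧ ∃ j, ρ (OrbGroup.z j) ≠ 1)) ↔
        ((0 < p ∧ ∃ j, p ∣ μ j) ∨ ρ = 1 ∨ ∃ j, ρ (OrbGroup.z j) ≠ 1) := by
      norm_num
    rw [hR]
    set a := H1Orb.cg ρ (Sum.inl (0 : Fin 1)) with hadef
    set b := H1Orb.cg ρ (Sum.inr (Sum.inl (0 : Fin 1))) with hbdef
    have hfr1 : List.finRange 1 = [(0 : Fin 1)] := rfl
    have xy1 : ∀ v : H1Orb.TT 1 s → k, H1Orb.xyLam ρ v
        = (1 - b) * v (Sum.inl 0) + (a - 1) * v (Sum.inr (Sum.inl 0)) := by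
      intro v
      rw [H1Orb.xyLam_apply, hfr1]
      simp
      rfl
    constructor
    · -- nontrivial H1 implies the disjunction; contrapositive
      intro hnle
      by_contra hR2
      push_neg at hR2
      obtain ⟨hnp, hrho, hz⟩ := hR2
      apply hnle
      -- all cg on z generators are 1, all NN nonzero
      have hcz : ∀ j, H1Orb.cg ρ (Sum.inr (Sum.inr j)) = 1 := by
        intro j
        exact (H1Orb.cg_eq_one_iff ρ _).mpr (hz j)
      have hNN : ∀ j, H1Orb.NN ρ j ≠ 0 := by
        intro j hNj
        rcases (H1Orb.NN_eq_zero_iff ρ j).mp hNj with h | h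
        · exact h (hcz j)
        · have hpdvd : p ∣ μ j := (CharP.cast_eq_zero_iff k p (μ j)).mp h
          have hp0 : 0 < p := by
            rcases Nat.eq_zero_or_pos p with rfl | hp
            · have := Nat.eq_zero_of_zero_dvd hpdvd
              have := hμ j
              omega
            · exact hp
          exact (hnp hp0 j) hpdvd
      have hab : a ≠ 1 ∨ b ≠ 1 := by
        by_contra hcon
        push_neg at hcon
        apply hrho
        rw [H1Orb.rho_eq_one_iff]
        intro t
        rcases t with i | t
        · have : i = 0 := Fin.eq_zero i
          subst this
          exact (H1Orb.cg_eq_one_iff ρ _).mp hcon.1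
        · rcases t with i | j
          · have : i = 0 := Fin.eq_zero i
            subst this
            exact (H1Orb.cg_eq_one_iff ρ _).mp hcon.2
          · exact hz j
      -- show SS ≤ PP
      intro v hv
      rw [H1Orb.mem_SS] at hv
      obtain ⟨hlam, hnn⟩ := hv
      have hvz : ∀ j, v (Sum.inr (Sum.inr j)) = 0 := by
        intro j
        rcases mul_eq_zero.mp (hnn j) with h | h
        · exact absurd h (hNN j)
        · exact h
      rw [H1Orb.Lam_apply, xy1,
        H1Orb.zLam_eq_zero ρ 1 (List.finRange s) v (fun l _ => hvz l), add_zero] at hlam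
      set X := v (Sum.inl (0 : Fin 1)) with hX
      set Y := v (Sum.inr (Sum.inl (0 : Fin 1))) with hY
      rw [H1Orb.PP, Submodule.mem_span_singleton]
      rcases em (a = 1) with ha1 | ha1
      · -- then b ≠ 1 and X = 0
        have hb1 : b ≠ 1 := by
          rcases hab with h | h
          · exact absurd ha1 h
          · exact h
        have hX0 : X = 0 := by
          rw [ha1] at hlam
          have h4 : (1 - b) * X = 0 := by linear_combination hlam
          rcases mul_eq_zero.mp h4 with h | h
          · exact absurd (by linear_combination -h : b = (1:k)) hb1
          · exact h
        refine ⟨Y / (b - 1), ?_⟩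
        funext t
        rw [Pi.smul_apply, smul_eq_mul, H1Orb.pz_apply]
        rcases t with i | t
        · have : i = 0 := Fin.eq_zero i
          subst this
          rw [← hadef, ha1, ← hX, hX0]
          ring
        · rcases t with i | j
          · have : i = 0 := Fin.eq_zero i
            subst this
            rw [← hbdef, ← hY]
            field_simp [sub_ne_zero.mpr hb1]
          · rw [hcz j, hvz j]
            ring
      · refine ⟨X / (a - 1), ?_⟩
        have hane : a - 1 ≠ 0 := sub_ne_zero.mpr ha1
        funext t
        rw [Pi.smul_apply, smul_eq_mul, H1Orb.pz_apply]
        rcases t with i | t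
        · have : i = 0 := Fin.eq_zero i
          subst this
          rw [← hadef, ← hX]
          field_simp
        · rcases t with i | j
          · have : i = 0 := Fin.eq_zero i
            subst this
            rw [← hbdef, ← hY]
            rw [div_mul_eq_mul_div, div_eq_iff hane]
            linear_combination -hlam
          · rw [hcz j, hvz j]
            ring
    · -- the disjunction implies nontriviality
      intro hcase
      by_cases hab : a = 1 ∧ b = 1
      · -- the vector (1,0,...,0) works
        set v : H1Orb.TT 1 s → k :=
          Sum.elim (fun _ => (1 : k)) (Sum.elim (fun _ => 0) (fun _ => 0)) with hvdef
        have hv : v ∈ H1Orb.SS ρ := by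
          rw [H1Orb.mem_SS]
          constructor
          · rw [H1Orb.Lam_apply, xy1,
              H1Orb.zLam_eq_zero ρ 1 (List.finRange s) v (fun l _ => rfl), add_zero]
            simp only [hvdef, Sum.elim_inl, Sum.elim_inr]
            rw [hab.2]
            ring
          · intro j
            simp [hvdef]
        intro hle
        obtain ⟨c, hc⟩ := Submodule.mem_span_singleton.mp (hle hv)
        have h0 := congrFun hc (Sum.inl (0 : Fin 1))
        rw [Pi.smul_apply, smul_eq_mul, H1Orb.pz_apply] at h0
        rw [← hadef, hab.1] at h0
        simp [hvdef] at h0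
      · -- there is some j with NN j = 0
        have hjz : ∃ j, H1Orb.NN ρ j = 0 := by
          rcases hcase with ⟨hp, j, hpj⟩ | h1 | ⟨j, hj⟩
          · exact ⟨j, (H1Orb.NN_eq_zero_iff ρ j).mpr
              (Or.inr ((CharP.cast_eq_zero_iff k p (μ j)).mpr hpj))⟩
          · exfalso
            apply hab
            constructor
            · rw [hadef, H1Orb.cg_eq_one_iff, h1]; rfl
            · rw [hbdef, H1Orb.cg_eq_one_iff, h1]; rfl
          · exact ⟨j, (H1Orb.NN_eq_zero_iff ρ j).mpr
              (Or.inl (fun h => hj ((H1Orb.cg_eq_one_iff ρ _).mp h)))⟩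
        obtain ⟨j, hNj⟩ := hjz
        obtain ⟨w, hw, hwv⟩ := H1Orb.zLam_single ρ (List.finRange s) j
          (List.mem_finRange j) (List.nodup_finRange s) 1 one_ne_zero
        obtain ⟨X, Y, hXY⟩ : ∃ X Y : k, (1 - b) * X + (a - 1) * Y + w = 0 := by
          rcases not_and_or.mp hab with ha' | hb'
          · have h := sub_ne_zero.mpr ha'
            exact ⟨0, -w / (a - 1), by field_simp; ring⟩
          · have h : (1 : k) - b ≠ 0 := fun hcon => hb' (by linear_combination -hcon)
            exact ⟨-w / (1 - b), 0, by field_simp; ring⟩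
        set v₁ : H1Orb.TT 1 s → k :=
          Sum.elim (fun _ => X) (Sum.elim (fun _ => Y)
            (fun l => if l = j then 1 else 0)) with hv1def
        set v₂ : H1Orb.TT 1 s → k :=
          Sum.elim (fun _ => a - 1) (Sum.elim (fun _ => b - 1) (fun _ => 0)) with hv2def
        have hv1z : ∀ l, l ≠ j → v₁ (Sum.inr (Sum.inr l)) = 0 := by
          intro l hl
          simp [hv1def, hl]
        have hv1 : v₁ ∈ H1Orb.SS ρ := by
          rw [H1Orb.mem_SS]
          constructor
          · rw [H1Orb.Lam_apply, xy1, hwv v₁ hv1z]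
            simp only [hv1def, Sum.elim_inl, Sum.elim_inr, eq_self_iff_true, if_true]
            linear_combination hXY
          · intro l
            by_cases hlj : l = j
            · subst hlj
              simp [hv1def, hNj]
            · simp [hv1def, hlj]
        have hv2 : v₂ ∈ H1Orb.SS ρ := by
          rw [H1Orb.mem_SS]
          constructor
          · rw [H1Orb.Lam_apply, xy1,
              H1Orb.zLam_eq_zero ρ 1 (List.finRange s) v₂ (fun l _ => rfl), add_zero]
            simp only [hv2def, Sum.elim_inl, Sum.elim_inr]
            ring
          · intro l
            simp [hv2def]
        intro hle
        obtain ⟨c2, hc2⟩ := Submodule.mem_span_singleton.mp (hle hv2)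
        obtain ⟨c1, hc1⟩ := Submodule.mem_span_singleton.mp (hle hv1)
        have hc2one : c2 = 1 := by
          rcases not_and_or.mp hab with ha' | hb'
          · have h0 := congrFun hc2 (Sum.inl (0 : Fin 1))
            rw [Pi.smul_apply, smul_eq_mul, H1Orb.pz_apply, ← hadef] at h0
            simp only [hv2def, Sum.elim_inl] at h0
            exact mul_right_cancel₀ (sub_ne_zero.mpr ha') (by linear_combination h0)
          · have h0 := congrFun hc2 (Sum.inr (Sum.inl (0 : Fin 1)))
            rw [Pi.smul_apply, smul_eq_mul, H1Orb.pz_apply, ← hbdef] at h0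
            simp only [hv2def, Sum.elim_inr, Sum.elim_inl] at h0
            exact mul_right_cancel₀ (sub_ne_zero.mpr hb') (by linear_combination h0)
        have hcj : H1Orb.cg ρ (Sum.inr (Sum.inr j)) = 1 := by
          have h0 := congrFun hc2 (Sum.inr (Sum.inr j))
          rw [Pi.smul_apply, smul_eq_mul, H1Orb.pz_apply, hc2one, one_mul] at h0
          simp only [hv2def, Sum.elim_inr] at h0
          linear_combination h0
        have h1 := congrFun hc1 (Sum.inr (Sum.inr j))
        rw [Pi.smul_apply, smul_eq_mul, H1Orb.pz_apply, hcj] at h1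
        simp [hv1def] at h1
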